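/- arXiv:1207.6104 — 6 statements merged into one kernel-verified Lean document; each statement's English description precedes it below -/
import Mathlib

section
/- ∏_{p prime} (p² + 1)/(p² - 1) = 5/2. -/
/-!
Both `∏ₚ (1 - p⁻ᵏ)⁻¹ = ζ(k)` and `∏ₚ (1 - p⁻²ᵏ)⁻¹ = ζ(2k)` are Euler products, and
`(y + 1) / (y - 1) = (1 - y⁻¹)⁻² (1 - y⁻²)` factor by factor, so
`∏ₚ (pᵏ + 1) / (pᵏ - 1) = ζ(k)² / ζ(2k)`. For `k = 2` this is `(π² / 6)² / (π⁴ / 90) = 5 / 2`.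
-/

open Nat

lemma hasProd_one_sub_inv_pow_inv {k : ℕ} (hk : 1 < k) :
    HasProd (fun p : Primes ↦ (1 - ((p : ℝ) ^ k)⁻¹)⁻¹) (∑' n : ℕ, ((n : ℝ) ^ k)⁻¹) := by
  let f : ℕ →*₀ ℝ :=
    invMonoidWithZeroHom.comp
      ((powMonoidWithZeroHom (by omega : k ≠ 0)).comp (castRingHom ℝ).toMonoidWithZeroHom)
  have hf : ∀ n, f n = ((n : ℝ) ^ k)⁻¹ := fun _ ↦ rfl
  have hsum : Summable (‖f ·‖) := by
    simpa only [hf, norm_inv, norm_pow, Real.norm_natCast] using Real.summable_nat_pow_inv.mpr hk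
  simpa only [hf] using EulerProduct.eulerProduct_completely_multiplicative_hasProd hsum

lemma add_one_div_sub_one_eq {y : ℝ} (hy : 1 < y) :
    (y + 1) / (y - 1) = ((1 - y⁻¹)⁻¹) ^ 2 / (1 - (y ^ 2)⁻¹)⁻¹ := by
  have hy0 : y ≠ 0 := by positivity
  have hy1 : y - 1 ≠ 0 := by linarith
  have hy2 : y ^ 2 - 1 ≠ 0 := by nlinarith
  field_simp
  ring

lemma one_le_tsum_inv_pow {k : ℕ} (hk : 1 < k) : 1 ≤ ∑' n : ℕ, ((n : ℝ) ^ k)⁻¹ := by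
  simpa using (Real.summable_nat_pow_inv.mpr hk).le_tsum 1 fun n _ ↦ by positivity

theorem hasProd_pow_add_one_div_pow_sub_one {k : ℕ} (hk : 1 < k) :
    HasProd (fun p : Primes ↦ ((p : ℝ) ^ k + 1) / ((p : ℝ) ^ k - 1))
      ((∑' n : ℕ, ((n : ℝ) ^ k)⁻¹) ^ 2 / ∑' n : ℕ, ((n : ℝ) ^ (2 * k))⁻¹) := by
  have h2k : 1 < 2 * k := by omega
  have hζ2k_ne : ∑' n : ℕ, ((n : ℝ) ^ (2 * k))⁻¹ ≠ 0 :=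
    (zero_lt_one.trans_le (one_le_tsum_inv_pow h2k)).ne'
  have hprod := ((hasProd_one_sub_inv_pow_inv hk).pow 2).div₀
    (hasProd_one_sub_inv_pow_inv h2k) hζ2k_ne
  refine hprod.congr_fun fun p ↦ ?_
  have hp : 1 < (p : ℝ) ^ k := one_lt_pow₀ (mod_cast p.prop.one_lt) (by omega)
  rw [add_one_div_sub_one_eq hp, ← pow_mul, mul_comm]

theorem prod_primes_sq_add_one_div_sq_sub_one :
    ∏' p : Nat.Primes, (((p : ℝ) ^ 2 + 1) / ((p : ℝ) ^ 2 - 1)) = 5 / 2 := by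
  have hζ2 : ∑' n : ℕ, ((n : ℝ) ^ 2)⁻¹ = Real.pi ^ 2 / 6 := by
    simpa only [one_div] using hasSum_zeta_two.tsum_eq
  have hζ4 : ∑' n : ℕ, ((n : ℝ) ^ (2 * 2))⁻¹ = Real.pi ^ 4 / 90 := by
    simpa only [one_div] using hasSum_zeta_four.tsum_eq
  rw [(hasProd_pow_add_one_div_pow_sub_one one_lt_two).tprod_eq, hζ2, hζ4]
  field_simp [Real.pi_ne_zero]
  ring
end

section
/- If (p_n) is an increasing sequence of positive integers such that for some constant c > 0 one has n ≤ c · p_n / (log p_n)² for all n ≥ 2, then the series ∑_{n≥1} 1/p_n converges. -/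
/-!
Since `p` is strictly increasing, `n ≤ p n`, so `log n ≤ log (p n)` and the hypothesis gives
`n (log n)² ≤ c p n`. Hence `1 / p n ≤ c / (n (log n)²)`, and `∑ 1 / (n (log n)²)` converges by
Cauchy condensation: its condensed series is a constant multiple of `∑ 1 / k²`.
-/

open Real Filter

theorem summable_one_div_nat_mul_log_rpow {p : ℝ} (hp : 1 < p) :
    Summable fun n : ℕ => 1 / (n * log n ^ p) := by
  have hlog_nonneg (n : ℕ) : 0 ≤ log n := log_natCast_nonneg n
  -- The terms at `n = 0, 1` are `1 / 0 = 0`, so the sequence is only eventually antitone.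
  refine (summable_condensed_iff_of_eventually_nonneg
    (Eventually.of_forall fun n => by have := hlog_nonneg n; positivity) ?_).mp ?_
  · filter_upwards [eventually_ge_atTop 2] with n hn
    have hn' : (1 : ℝ) < n := by exact_mod_cast hn
    have hcast : (n : ℝ) ≤ (n + 1 : ℕ) := by exact_mod_cast n.le_succ
    gcongr
    have := log_pos hn'
    positivity
  · have hterm (k : ℕ) : (2 : ℝ) ^ k * (1 / ((2 ^ k : ℕ) * log (2 ^ k : ℕ) ^ p)) =
        (log 2 ^ p)⁻¹ * (1 / (k : ℝ) ^ p) := by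
      have hlog2 : 0 ≤ log 2 := by positivity
      push_cast
      rw [log_pow, mul_rpow k.cast_nonneg hlog2]
      field_simp
    simpa only [hterm] using (summable_one_div_nat_rpow.mpr hp).mul_left _

theorem one_div_le_mul_one_div_mul_log_sq {n x c : ℝ} (hn : 1 < n) (hnx : n ≤ x)
    (h : n ≤ c * x / log x ^ 2) : 1 / x ≤ c * (1 / (n * log n ^ 2)) := by
  have hlog_n : 0 < log n := log_pos hn
  have hlog_x : 0 < log x := log_pos (hn.trans_le hnx)
  have hkey : n * log n ^ 2 ≤ c * x := calc
    n * log n ^ 2 ≤ n * log x ^ 2 := by gcongr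
    _ ≤ c * x := (le_div_iff₀ (by positivity)).mp h
  rw [mul_one_div, div_le_div_iff₀ (by linarith) (by positivity)]
  linarith

theorem summable_reciprocal_of_counting_bound_general (p : ℕ → ℕ) (hmono : StrictMono p) (c : ℝ)
    (hbound : ∀ n : ℕ, 2 ≤ n → (n : ℝ) ≤ c * (p n : ℝ) / (Real.log (p n)) ^ 2) :
    Summable (fun n : ℕ => 1 / (p n : ℝ)) := by
  have hlog_sq : Summable fun n : ℕ => c * (1 / (n * log n ^ 2)) := by
    simpa only [rpow_two] using (summable_one_div_nat_mul_log_rpow one_lt_two).mul_left c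
  rw [← summable_nat_add_iff 2] at hlog_sq ⊢
  refine hlog_sq.of_nonneg_of_le (fun n => by positivity) fun n => ?_
  exact one_div_le_mul_one_div_mul_log_sq (by norm_cast; omega)
    (by exact_mod_cast hmono.le_apply) (hbound (n + 2) (by omega))

theorem summable_reciprocal_of_counting_bound (p : ℕ → ℕ) (hmono : StrictMono p)
    (hp2 : ∀ n, 2 ≤ p n) (c : ℝ) (hc : 0 < c)
    (hbound : ∀ n : ℕ, 2 ≤ n → (n : ℝ) ≤ c * (p n : ℝ) / (Real.log (p n)) ^ 2) :
    Summable (fun n : ℕ => 1 / (p n : ℝ)) :=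
  summable_reciprocal_of_counting_bound_general p hmono c hbound
end

section
/- There exist constants 0 < a < b such that for all sufficiently large real x, a·x/log x ≤ π(x) ≤ b·x/log x. -/
/-!
Both bounds are Chebyshev's, as proved in `Mathlib.NumberTheory.Chebyshev`. Every binomial
coefficient `choose n k` divides `lcm (1, …, n)`, so `ψ n ≥ n log 2 - log (n + 1)`, and
`ψ x ≤ π x · log x`; this gives `π x · log x ≥ c x` eventually for every `c < log 2`. The
primorial bound `θ x ≤ x log 4` and partial summation give `π x ≤ (log 4 + ε) x / log x`.
-/

open Filter Real

lemma eventually_log_add_le_mul {c : ℝ} (hc : 0 < c) (a : ℝ) :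
    ∀ᶠ x : ℝ in atTop, log (x + a) ≤ c * (x + a) := by
  have h := (tendsto_atTop_add_const_right _ a tendsto_id).eventually
    (isLittleO_log_id_atTop.bound hc)
  filter_upwards [h, eventually_ge_atTop (1 - a)] with x hx hxa
  simpa [norm_of_nonneg (log_nonneg (by linarith : 1 ≤ x + a)),
    abs_of_nonneg (by linarith : 0 ≤ x + a)] using hx

lemma eventually_mul_div_log_le_primeCounting {c : ℝ} (hc : c < log 2) :
    ∀ᶠ x : ℝ in atTop, c * x / log x ≤ Nat.primeCounting ⌊x⌋₊ := by
  obtain ⟨ε, hε, rfl⟩ : ∃ ε > 0, c = log 2 - 2 * ε := ⟨(log 2 - c) / 2, by linarith, by ring⟩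
  filter_upwards [eventually_log_add_le_mul hε 2, eventually_gt_atTop 1,
    eventually_ge_atTop ((2 * ε + log 2) / ε)] with x hlog hx1 hxε
  refine le_trans ?_ (Chebyshev.pi_ge' hx1)
  have hlogx := log_pos hx1
  gcongr
  have : 2 * ε + log 2 ≤ ε * x := by rwa [div_le_iff₀' hε] at hxε
  linarith

theorem chebyshev_pi_bounds :
    ∃ a b : ℝ, 0 < a ∧ a < b ∧
      ∀ᶠ x : ℝ in atTop,
        a * x / Real.log x ≤ (Nat.primeCounting ⌊x⌋₊ : ℝ) ∧
        (Nat.primeCounting ⌊x⌋₊ : ℝ) ≤ b * x / Real.log x := by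
  have hlog2 : 0 < log 2 := log_pos one_lt_two
  have hlog4 : log 2 < log 4 := log_lt_log two_pos (by norm_num)
  refine ⟨log 2 / 2, log 4 + 1, by positivity, by linarith, ?_⟩
  exact (eventually_mul_div_log_le_primeCounting (half_lt_self hlog2)).and
    (Chebyshev.eventually_primeCounting_le one_pos)
end

section
/- Let q be an odd prime such that p = 2q + 1 is also prime and p ≡ 3 (mod 8). Then 2 is a primitive root modulo p. -/
/-! For a safe prime `p = 2q + 1`, the prime divisors of `p - 1` are `2` and `q`, so `a ≠ 0`
fails to be a primitive root only if `a ^ q = 1` or `a ^ 2 = 1`. As `q = p / 2`, the first means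
that `a` is a square by Euler's criterion; the second means `a = ±1`. For `p ≡ 3 (mod 8)`, `2` is
a non-square by the second supplementary law, and `2 ≠ -1` since `p ≠ 3`. -/

namespace ZMod

variable {p : ℕ} [Fact p.Prime]

theorem orderOf_eq_card_sub_one_of_not_isSquare {q : ℕ} (hq : q.Prime) (hpq : p = 2 * q + 1)
    {a : ZMod p} (ha : ¬IsSquare a) (ha_ne : a ≠ -1) : orderOf a = p - 1 := by
  have ha0 : a ≠ 0 := fun h => ha (h ▸ IsSquare.zero)
  have hp1 : p - 1 = 2 * q := by omega
  refine orderOf_eq_of_pow_and_pow_div_prime (by have := hq.pos; omega)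
    (pow_card_sub_one_eq_one ha0) ?_
  intro r hr hrp
  rw [hp1] at hrp ⊢
  rcases hr.dvd_mul.mp hrp with hr2 | hrq
  · obtain rfl : r = 2 := (Nat.prime_dvd_prime_iff_eq hr Nat.prime_two).mp hr2
    rw [show 2 * q / 2 = p / 2 by omega]
    exact fun h => ha ((euler_criterion p ha0).mpr h)
  · obtain rfl : r = q := (Nat.prime_dvd_prime_iff_eq hr hq).mp hrq
    rw [Nat.mul_div_cancel _ hr.pos, Ne, sq_eq_one_iff, not_or]
    exact ⟨fun h => ha (h ▸ IsSquare.one), ha_ne⟩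

theorem two_ne_neg_one (hp : p ≠ 3) : (2 : ZMod p) ≠ -1 := by
  intro h
  have h3 : ((3 : ℕ) : ZMod p) = 0 := by
    push_cast
    linear_combination h
  rw [natCast_eq_zero_iff, Nat.dvd_prime Nat.prime_three] at h3
  exact h3.elim (Fact.out : p.Prime).one_lt.ne' hp

end ZMod

theorem two_primitive_root_of_germain_three_mod_eight_general (q p : ℕ)
    (hq : q.Prime) (hp : p.Prime) (hpq : p = 2 * q + 1)
    (hp8 : p % 8 = 3) :
    orderOf (2 : ZMod p) = p - 1 := by
  have : Fact p.Prime := ⟨hp⟩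
  have h2 : ¬IsSquare (2 : ZMod p) := by
    rw [ZMod.exists_sq_eq_two_iff (by omega)]
    omega
  exact ZMod.orderOf_eq_card_sub_one_of_not_isSquare hq hpq h2
    (ZMod.two_ne_neg_one (by have := hq.two_le; omega))

theorem two_primitive_root_of_germain_three_mod_eight (q p : ℕ)
    (hq : q.Prime) (hqodd : Odd q) (hp : p.Prime) (hpq : p = 2 * q + 1)
    (hp8 : p % 8 = 3) :
    orderOf (2 : ZMod p) = p - 1 :=
  two_primitive_root_of_germain_three_mod_eight_general q p hq hp hpq hp8
end

section
/- Let q be an odd prime such that p = 2q + 1 is also prime and p ≡ 7 (mod 8). Then -2 is a primitive root modulo p. -/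
/-! The order of `-2` divides `p - 1 = 2q`, so it is `2q` unless `(-2)^q = 1` or `(-2)^2 = 1`.
Since `p ≡ 7 mod 8`, `-2` is a non-residue and Euler's criterion gives `(-2)^q = -1`;
and `(-2)^2 = 1` would force `p ∣ 3`. -/

theorem Nat.Prime.eq_two_or_eq_of_dvd_two_mul {ℓ q : ℕ} (hℓ : ℓ.Prime) (hq : q.Prime)
    (h : ℓ ∣ 2 * q) : ℓ = 2 ∨ ℓ = q :=
  (hℓ.dvd_mul.mp h).imp (Nat.prime_dvd_prime_iff_eq hℓ Nat.prime_two).mp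
    (Nat.prime_dvd_prime_iff_eq hℓ hq).mp

namespace ZMod

theorem neg_two_ne_zero {n : ℕ} (h : ¬ n ∣ 2) : (-2 : ZMod n) ≠ 0 := by
  rw [neg_ne_zero, ← Nat.cast_ofNat, Ne, natCast_eq_zero_iff]
  exact h

theorem neg_two_sq_ne_one {n : ℕ} (h : ¬ n ∣ 3) : (-2 : ZMod n) ^ 2 ≠ 1 := by
  intro h4
  have h3 : ((3 : ℕ) : ZMod n) = 0 := by
    push_cast
    linear_combination h4
  exact h ((natCast_eq_zero_iff 3 n).mp h3)

theorem neg_two_pow_div_two_ne_one {p : ℕ} [Fact p.Prime] (hp : p % 8 = 7) :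
    (-2 : ZMod p) ^ (p / 2) ≠ 1 := by
  rw [Ne, ← euler_criterion p (neg_two_ne_zero (Nat.not_dvd_of_pos_of_lt two_pos (by omega))),
    exists_sq_eq_neg_two_iff (by omega)]
  omega

end ZMod

theorem neg_two_primitive_root_of_germain_seven_mod_eight_general (q p : ℕ)
    (hq : q.Prime) (hp : p.Prime) (hpq : p = 2 * q + 1)
    (hp8 : p % 8 = 7) :
    orderOf (-2 : ZMod p) = p - 1 := by
  have : Fact p.Prime := ⟨hp⟩
  have hp_sub : p - 1 = 2 * q := by omega
  have hne : (-2 : ZMod p) ≠ 0 :=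
    ZMod.neg_two_ne_zero (Nat.not_dvd_of_pos_of_lt two_pos (by omega))
  apply orderOf_eq_of_pow_and_pow_div_prime (by omega) (ZMod.pow_card_sub_one_eq_one hne)
  intro ℓ hℓ hℓ_dvd
  rw [hp_sub] at hℓ_dvd ⊢
  rcases hℓ.eq_two_or_eq_of_dvd_two_mul hq hℓ_dvd with rfl | rfl
  · rw [Nat.mul_div_cancel_left q two_pos, show q = p / 2 by omega]
    exact ZMod.neg_two_pow_div_two_ne_one hp8
  · rw [Nat.mul_div_cancel 2 hq.pos]
    exact ZMod.neg_two_sq_ne_one (Nat.not_dvd_of_pos_of_lt three_pos (by omega))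

theorem neg_two_primitive_root_of_germain_seven_mod_eight (q p : ℕ)
    (hq : q.Prime) (hqodd : Odd q) (hp : p.Prime) (hpq : p = 2 * q + 1)
    (hp8 : p % 8 = 7) :
    orderOf (-2 : ZMod p) = p - 1 :=
  neg_two_primitive_root_of_germain_seven_mod_eight_general q p hq hp hpq hp8
end

section
/- Let q be an odd prime such that p = 4q + 1 is also prime. Then 2 is a primitive root modulo p. -/
/-!
Since `q` is odd, `p = 4q + 1 ≡ 5 (mod 8)`, so `2` is a quadratic nonresidue mod `p` and
Euler's criterion gives `2 ^ (2q) ≠ 1`. The only primes dividing `p - 1 = 4q` are `2` and `q`,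
and `2 ^ ((p - 1) / q) = 16 ≠ 1` because `p ∤ 15`. By Lucas' test the order of `2` is `p - 1`.
-/

namespace ZMod

theorem two_pow_div_two_ne_one {p : ℕ} [Fact p.Prime] (hp8 : p % 8 = 3 ∨ p % 8 = 5) :
    (2 : ZMod p) ^ (p / 2) ≠ 1 := by
  have h2 : (2 : ZMod p) ≠ 0 := Ring.two_ne_zero (by rw [ringChar_zmod_n]; omega)
  rw [Ne, ← euler_criterion p h2, exists_sq_eq_two_iff (by omega)]
  omega

theorem two_pow_four_ne_one {p : ℕ} (hp : p.Prime) (h3 : p ≠ 3) (h5 : p ≠ 5) :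
    (2 : ZMod p) ^ 4 ≠ 1 := by
  intro h
  have h15 : ((3 * 5 : ℕ) : ZMod p) = 0 := by
    push_cast
    linear_combination h
  rcases (hp.dvd_mul.mp ((natCast_eq_zero_iff _ _).mp h15)) with h | h
  · exact h3 ((Nat.prime_dvd_prime_iff_eq hp Nat.prime_three).mp h)
  · exact h5 ((Nat.prime_dvd_prime_iff_eq hp Nat.prime_five).mp h)

end ZMod

theorem two_primitive_root_of_four_q_add_one (q p : ℕ)
    (hq : q.Prime) (hqodd : Odd q) (hp : p.Prime) (hpq : p = 4 * q + 1) :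
    orderOf (2 : ZMod p) = p - 1 := by
  have := Fact.mk hp
  have h2 : (2 : ZMod p) ≠ 0 := Ring.two_ne_zero (by rw [ZMod.ringChar_zmod_n]; omega)
  have hp8 : p % 8 = 5 := by
    obtain ⟨k, rfl⟩ := hqodd
    omega
  refine orderOf_eq_of_pow_and_pow_div_prime (by omega) (ZMod.pow_card_sub_one_eq_one h2) ?_
  intro r hr hrp
  have hp1 : p - 1 = 2 ^ 2 * q := by omega
  rw [hp1] at hrp ⊢
  rcases hr.dvd_mul.mp hrp with h4 | hrq
  · obtain rfl : r = 2 := (Nat.prime_dvd_prime_iff_eq hr Nat.prime_two).mp (hr.dvd_of_dvd_pow h4)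
    rw [show 2 ^ 2 * q / 2 = p / 2 by omega]
    exact ZMod.two_pow_div_two_ne_one (Or.inr hp8)
  · obtain rfl : r = q := (Nat.prime_dvd_prime_iff_eq hr hq).mp hrq
    rw [Nat.mul_div_cancel _ hq.pos]
    exact ZMod.two_pow_four_ne_one hp (by omega) (by have := hq.two_le; omega)
end
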